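/- Let S be an electrical positroid on n boundary vertices and let (P,a,b,c,Q; R,d,e,f,T) be a circular pair, where P,Q,R,T are (possibly empty) tuples of boundary vertices and a,b,c,d,e,f are single boundary vertices. Suppose that the size-one pairs (a;d),(a;e),(b;d),(b;e),(b;f),(c;e),(c;f) all lie in S, that (P,a,b;R,d,e) ∈ S, and that (P,a,c,Q;R,d,f,T) ∈ S. Then (P,a,b,Q;R,d,e,T) ∈ S. -/

import Mathlib

namespace CircularPlanar

/-- A "pre-pair": an ordered pair of lists of boundary vertices.  The boundary
vertices are labeled by `Fin n`, where `i : Fin n` represents the vertex with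
label `i+1`, and the labels `1, …, n` occur in clockwise order. -/
abbrev PrePair (n : ℕ) := List (Fin n) × List (Fin n)

/-- The identification `(P;Q) ↦ (Q̃;P̃)`. -/
def cpFlip {n : ℕ} (pq : PrePair n) : PrePair n := (pq.2.reverse, pq.1.reverse)

/-- A list of boundary vertices occurs in clockwise cyclic order if some
rotation of it is strictly increasing. -/
def ClockwiseCyclic {n : ℕ} (l : List (Fin n)) : Prop :=
  ∃ k : ℕ, List.Chain' (· < ·) (l.rotate k)

/-- `(P;Q)` is a circular pair if `P`, `Q` are disjoint tuples of boundary
vertices of equal length, and `p_1, …, p_k, q_k, …, q_1` is in clockwise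
cyclic order. -/
def IsCircularPair {n : ℕ} (pq : PrePair n) : Prop :=
  pq.1.length = pq.2.length ∧ pq.1.Nodup ∧ pq.2.Nodup ∧
    (∀ x ∈ pq.1, x ∉ pq.2) ∧ ClockwiseCyclic (pq.1 ++ pq.2.reverse)

/-- The setoid identifying `(P;Q)` with `(Q̃;P̃)`. -/
instance cpSetoid (n : ℕ) : Setoid (PrePair n) where
  r x y := x = y ∨ x = cpFlip y
  iseqv := by
    refine ⟨fun x => Or.inl rfl, ?_, ?_⟩
    · rintro x y (rfl | rfl)
      · exact Or.inl rfl
      · right; simp [cpFlip]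
    · rintro x y z (rfl | rfl) (rfl | rfl)
      · exact Or.inl rfl
      · exact Or.inr rfl
      · exact Or.inr rfl
      · left; simp [cpFlip]

/-- Circular pairs up to the identification `(P;Q) = (Q̃;P̃)`. -/
def CircPair (n : ℕ) := Quotient (cpSetoid n)

/-- The class of a pre-pair. -/
def cp {n : ℕ} (pq : PrePair n) : CircPair n := Quotient.mk (cpSetoid n) pq

/-- The electrical positroid axioms. -/
def ElectricalPositroid (n : ℕ) (S : Set (CircPair n)) : Prop :=
  -- `S` is a set of circular pairs
  (∀ x ∈ S, ∃ pq : PrePair n, IsCircularPair pq ∧ x = cp pq) ∧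
  -- Axioms (1a), (1b), (1c)
  (∀ P Q : List (Fin n), ∀ a b c d : Fin n, IsCircularPair (P, Q) →
    List.Sublist [a, b] P → List.Sublist [c, d] Q →
    ((cp (P.erase a, Q.erase c) ∈ S ∧ cp (P.erase b, Q.erase d) ∈ S →
        (cp (P.erase a, Q.erase d) ∈ S ∧ cp (P.erase b, Q.erase c) ∈ S) ∨
        (cp ((P.erase a).erase b, (Q.erase c).erase d) ∈ S ∧ cp (P, Q) ∈ S)) ∧
     (cp (P.erase a, Q.erase d) ∈ S ∧ cp (P.erase b, Q.erase c) ∈ S →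
        cp (P.erase a, Q.erase c) ∈ S ∧ cp (P.erase b, Q.erase d) ∈ S) ∧
     (cp ((P.erase a).erase b, (Q.erase c).erase d) ∈ S ∧ cp (P, Q) ∈ S →
        cp (P.erase a, Q.erase c) ∈ S ∧ cp (P.erase b, Q.erase d) ∈ S))) ∧
  -- Axioms (2a), (2b), (2c)
  (∀ P Q : List (Fin n), ∀ a b c d : Fin n,
    P.length = Q.length + 1 → ClockwiseCyclic (P ++ Q.reverse) →
    List.Sublist [a, b, c] P → d ∈ Q →
    ((cp (P.erase b, Q) ∈ S ∧ cp ((P.erase a).erase c, Q.erase d) ∈ S →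
        (cp (P.erase a, Q) ∈ S ∧ cp ((P.erase b).erase c, Q.erase d) ∈ S) ∨
        (cp (P.erase c, Q) ∈ S ∧ cp ((P.erase a).erase b, Q.erase d) ∈ S)) ∧
     (cp (P.erase a, Q) ∈ S ∧ cp ((P.erase b).erase c, Q.erase d) ∈ S →
        cp (P.erase b, Q) ∈ S ∧ cp ((P.erase a).erase c, Q.erase d) ∈ S) ∧
     (cp (P.erase c, Q) ∈ S ∧ cp ((P.erase a).erase b, Q.erase d) ∈ S →
        cp (P.erase b, Q) ∈ S ∧ cp ((P.erase a).erase c, Q.erase d) ∈ S))) ∧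
  -- Axiom (3): the subset axiom
  (∀ P Q : List (Fin n), IsCircularPair (P, Q) → cp (P, Q) ∈ S →
    ∀ i : ℕ, i < P.length → cp (P.eraseIdx i, Q.eraseIdx i) ∈ S) ∧
  -- Axiom (4)
  cp (([] : List (Fin n)), ([] : List (Fin n))) ∈ S

section AuxLemmas

variable {n : ℕ}

theorem cp_flip_eq (A B : List (Fin n)) :
    cp ((A, B) : PrePair n) = cp ((B.reverse, A.reverse) : PrePair n) :=
  Quotient.sound (Or.inr (by simp [cpFlip]))

theorem chain'_lt_nodup {l : List (Fin n)} (h : List.Chain' (· < ·) l) : l.Nodup :=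
  (List.isChain_iff_pairwise.mp h).imp ne_of_lt

theorem cc_nodup {l : List (Fin n)} (h : ClockwiseCyclic l) : l.Nodup := by
  obtain ⟨k, hk⟩ := h
  exact (List.rotate_perm l k).nodup_iff.mp (chain'_lt_nodup hk)

theorem cc_sublist {l₁ l₂ : List (Fin n)} (hs : List.Sublist l₁ l₂)
    (h : ClockwiseCyclic l₂) : ClockwiseCyclic l₁ := by
  obtain ⟨k, hk⟩ := h
  rcases Nat.eq_zero_or_pos l₂.length with h0 | hpos
  · rw [List.length_eq_zero_iff] at h0
    subst h0
    rw [List.sublist_nil] at hs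
    subst hs
    exact ⟨0, by simp; exact List.IsChain.nil⟩
  · have hk' : l₂.rotate (k % l₂.length) =
        l₂.drop (k % l₂.length) ++ l₂.take (k % l₂.length) :=
      List.rotate_eq_drop_append_take (le_of_lt (Nat.mod_lt _ hpos))
    rw [List.rotate_mod] at hk'
    rw [hk'] at hk
    have hs' : List.Sublist l₁ (l₂.take (k % l₂.length) ++ l₂.drop (k % l₂.length)) := by
      rw [List.take_append_drop]; exact hs
    obtain ⟨u, v, rfl, hu, hv⟩ := List.sublist_append_iff.mp hs'
    refine ⟨u.length, ?_⟩
    have h2 : (u ++ v).rotate u.length = v ++ u := by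
      rw [List.rotate_eq_drop_append_take (by simp), List.drop_left, List.take_left]
    rw [h2]
    exact List.IsChain.sublist hk (hv.append hu)

theorem cc_comm {l₁ l₂ : List (Fin n)} (h : ClockwiseCyclic (l₁ ++ l₂)) :
    ClockwiseCyclic (l₂ ++ l₁) := by
  obtain ⟨k, hk⟩ := h
  rcases eq_or_ne (l₁ ++ l₂) [] with h0 | h0
  · rw [List.append_eq_nil_iff] at h0
    exact ⟨0, by simp [h0.1, h0.2]; exact List.IsChain.nil⟩
  · have hlen : l₁.length ≤ (l₁ ++ l₂).length := by simp
    have h1 : l₂ ++ l₁ = (l₁ ++ l₂).rotate l₁.length := by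
      rw [List.rotate_eq_drop_append_take hlen, List.drop_left, List.take_left]
    refine ⟨k + ((l₁ ++ l₂).length - l₁.length), ?_⟩
    rw [h1, List.rotate_rotate]
    have h2 : l₁.length + (k + ((l₁ ++ l₂).length - l₁.length)) = k + (l₁ ++ l₂).length := by
      omega
    rw [h2, ← List.rotate_rotate]
    rw [show (l₁ ++ l₂).length = ((l₁ ++ l₂).rotate k).length from (List.length_rotate _ _).symm]
    rw [List.rotate_length]
    exact hk

theorem isCP_aux {w A B : List (Fin n)} (hw : ClockwiseCyclic w)
    (hlen : A.length = B.length) (hsub : List.Sublist (A ++ B.reverse) w) :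
    IsCircularPair ((A, B) : PrePair n) := by
  have hnd : (A ++ B.reverse).Nodup := List.Nodup.sublist hsub (cc_nodup hw)
  rw [List.nodup_append] at hnd
  exact ⟨hlen, hnd.1, by simpa using hnd.2.1,
    fun x hx hx2 => hnd.2.2 x hx x (by simpa using hx2) rfl, cc_sublist hsub hw⟩

theorem sl_skip {α : Type*} {l m : List α} (A : List α) (h : List.Sublist l m) :
    List.Sublist l (A ++ m) :=
  (List.nil_sublist A).append h

theorem eraseIdx_append_len {α : Type*} (A : List α) (x : α) (B : List α) :
    (A ++ x :: B).eraseIdx A.length = A ++ B := by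
  induction A with
  | nil => rfl
  | cons y A ih =>
    simp only [List.cons_append, List.length_cons, List.eraseIdx_cons_succ, ih]

theorem erase_concat {α : Type*} [DecidableEq α] {x : α} (A B : List α) (hx : x ∉ A) :
    (A ++ x :: B).erase x = A ++ B := by
  rw [List.erase_append_right _ hx, List.erase_cons_head]

theorem erase_cons_ne {α : Type*} [DecidableEq α] {x y : α} (h : y ≠ x) (B : List α) :
    (y :: B).erase x = y :: B.erase x := by
  simp [List.erase_cons, h]

theorem take_succ_eq {α : Type*} (l : List α) {k : ℕ} (h : k < l.length) :
    l.take (k + 1) = l.take k ++ [l[k]] := by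
  rw [← List.take_concat_get h, List.concat_eq_append]

theorem mem_take_succ {α : Type*} (l : List α) {k : ℕ} (h : k < l.length) :
    l[k] ∈ l.take (k + 1) := by
  rw [take_succ_eq l h]
  exact List.mem_append_right _ (List.mem_singleton_self _)

theorem not_mem_take_self {α : Type*} {l : List α} (hnd : l.Nodup) {k : ℕ} (h : k < l.length) :
    l[k] ∉ l.take k := by
  have h1 : (l.take (k + 1)).Nodup := List.Nodup.sublist (List.take_sublist _ _) hnd
  rw [take_succ_eq l h] at h1
  rw [List.nodup_append] at h1
  exact fun hm => h1.2.2 _ hm _ (by simp) rfl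

theorem eraseIdx_at_take {α : Type*} (l : List α) {m : ℕ} (h : m ≤ l.length) (x : α)
    (B : List α) : (l.take m ++ x :: B).eraseIdx m = l.take m ++ B := by
  have h2 := eraseIdx_append_len (l.take m) x B
  rwa [List.length_take, Nat.min_eq_left h] at h2

theorem eraseIdx_take_append {α : Type*} (l : List α) {m : ℕ} (h : m < l.length)
    (B : List α) : (l.take (m + 1) ++ B).eraseIdx m = l.take m ++ B := by
  rw [take_succ_eq l h, List.append_assoc, List.singleton_append]
  exact eraseIdx_at_take l h.le _ B

theorem eraseIdx_app_take {α : Type*} (A : List α) (l : List α) {k : ℕ} (h : k < l.length) :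
    (A ++ l.take (k + 1)).eraseIdx (A.length + k) = A ++ l.take k := by
  have h2 := eraseIdx_append_len (A ++ l.take k) (l[k]) []
  rw [List.length_append, List.length_take, Nat.min_eq_left h.le] at h2
  rw [take_succ_eq l h]
  rw [show A ++ (l.take k ++ [l[k]]) = (A ++ l.take k) ++ l[k] :: [] from by simp]
  rw [h2, List.append_nil]

end AuxLemmas
theorem statement_13 (n : ℕ) (S : Set (CircPair n))
    (hS : ElectricalPositroid n S) (P Q R T : List (Fin n)) (a b c d e f : Fin n)
    (hcp : IsCircularPair ((P ++ [a, b, c] ++ Q, R ++ [d, e, f] ++ T) : PrePair n))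
    (had : cp (([a], [d]) : PrePair n) ∈ S)
    (hae : cp (([a], [e]) : PrePair n) ∈ S)
    (hbd : cp (([b], [d]) : PrePair n) ∈ S)
    (hbe : cp (([b], [e]) : PrePair n) ∈ S)
    (hbf : cp (([b], [f]) : PrePair n) ∈ S)
    (hce : cp (([c], [e]) : PrePair n) ∈ S)
    (hcf : cp (([c], [f]) : PrePair n) ∈ S)
    (h8 : cp ((P ++ [a, b], R ++ [d, e]) : PrePair n) ∈ S)
    (h9 : cp ((P ++ [a, c] ++ Q, R ++ [d, f] ++ T) : PrePair n) ∈ S) :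
    cp ((P ++ [a, b] ++ Q, R ++ [d, e] ++ T) : PrePair n) ∈ S := by
  classical
  obtain ⟨hmem, _hax1, hax2, hax3, _hax4⟩ := hS
  obtain ⟨hlen0, hnd1, hnd2, _hdisj0, hcw0⟩ := hcp
  have hPR : P.length = R.length := by
    obtain ⟨pq, hpq, heq⟩ := hmem _ h8
    have hpl := hpq.1
    rcases Quotient.exact heq with h | h
    · have h1 := congrArg (fun z : PrePair n => z.1.length) h
      have h2 := congrArg (fun z : PrePair n => z.2.length) h
      simp only [List.length_append, List.length_cons, List.length_nil] at h1 h2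
      omega
    · have h1 := congrArg (fun z : PrePair n => z.1.length) h
      have h2 := congrArg (fun z : PrePair n => z.2.length) h
      simp only [cpFlip, List.length_append, List.length_reverse, List.length_cons,
        List.length_nil] at h1 h2
      omega
  have hQT : Q.length = T.length := by
    simp only [List.length_append, List.length_cons, List.length_nil] at hlen0
    omega
  have hcwW : ClockwiseCyclic
      (P ++ a :: b :: c :: (Q ++ (T.reverse ++ f :: e :: d :: R.reverse))) := by
    simpa using hcw0
  have hccT : ClockwiseCyclic
      (T.reverse ++ (f :: e :: d :: (R.reverse ++ (P ++ a :: b :: c :: Q)))) := by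
    have h := cc_comm (l₁ := P ++ a :: b :: c :: Q)
      (l₂ := T.reverse ++ f :: e :: d :: R.reverse) (by simpa using hcw0)
    simpa using h
  have hccF : ClockwiseCyclic
      (f :: e :: d :: (R.reverse ++ (P ++ a :: b :: c :: (Q ++ T.reverse)))) := by
    have h := cc_comm (l₁ := P ++ a :: b :: c :: (Q ++ T.reverse))
      (l₂ := f :: e :: d :: R.reverse) (by simpa using hcw0)
    simpa using h
  have hnd1' : (P ++ a :: b :: c :: Q).Nodup := by simpa using hnd1
  have hnd2' : (R ++ d :: e :: f :: T).Nodup := by simpa using hnd2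
  obtain ⟨hndP, hndM, hdisjP⟩ := List.nodup_append.mp hnd1'
  obtain ⟨haM, hndM2⟩ := List.nodup_cons.mp hndM
  obtain ⟨hbM, hndM3⟩ := List.nodup_cons.mp hndM2
  obtain ⟨hcM, hndQ⟩ := List.nodup_cons.mp hndM3
  obtain ⟨hndR, hndN, hdisjR⟩ := List.nodup_append.mp hnd2'
  obtain ⟨hdN, hndN2⟩ := List.nodup_cons.mp hndN
  obtain ⟨heN, hndN3⟩ := List.nodup_cons.mp hndN2
  obtain ⟨hfT, hndT⟩ := List.nodup_cons.mp hndN3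
  have hba : b ≠ a := fun h => haM (by simp [h])
  have hca : c ≠ a := fun h => haM (by simp [h])
  have hcb : c ≠ b := fun h => hbM (by simp [h])
  have haQ : a ∉ Q := fun h => haM (by simp [h])
  have hbQ : b ∉ Q := fun h => hbM (by simp [h])
  have hbP : b ∉ P := fun h => hdisjP _ h _ (by simp) rfl
  have hcP : c ∉ P := fun h => hdisjP _ h _ (by simp) rfl
  have hfe : f ≠ e := fun h => heN (by simp [h])
  have hfd : f ≠ d := fun h => hdN (by simp [h])
  have hdT : d ∉ T := fun h => hdN (by simp [h])
  have heT : e ∉ T := fun h => heN (by simp [h])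
  have hfR : f ∉ R := fun h => hdisjR _ h _ (by simp) rfl
  have hcirc8 : ∀ m, m ≤ P.length →
      IsCircularPair ((P.take m ++ [a, b], R.take m ++ [d, e]) : PrePair n) := by
    intro m hm
    refine isCP_aux hcwW (by simp only [List.length_append, List.length_take,
      List.length_cons, List.length_nil]; omega) ?_
    have e1 : (P.take m ++ [a, b]) ++ (R.take m ++ [d, e]).reverse
        = P.take m ++ (a :: b :: (e :: d :: (R.take m).reverse)) := by simp
    rw [e1]
    exact (List.take_sublist m P).append (.cons₂ a (.cons₂ b (.cons c (sl_skip Q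
      (sl_skip T.reverse (.cons f (.cons₂ e (.cons₂ d
        ((List.take_sublist m R).reverse)))))))))
  have hcirc9 : ∀ k, k ≤ Q.length →
      IsCircularPair ((P ++ [a, c] ++ Q.take k, R ++ [d, f] ++ T.take k) : PrePair n) := by
    intro k hk
    refine isCP_aux hcwW (by simp only [List.length_append, List.length_take,
      List.length_cons, List.length_nil]; omega) ?_
    have e1 : (P ++ [a, c] ++ Q.take k) ++ (R ++ [d, f] ++ T.take k).reverse
        = P ++ (a :: c :: (Q.take k ++ ((T.take k).reverse ++ (f :: d :: R.reverse)))) := by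
      simp
    rw [e1]
    exact (List.Sublist.refl P).append (.cons₂ a (.cons b (.cons₂ c
      ((List.take_sublist k Q).append (((List.take_sublist k T).reverse).append
        (.cons₂ f (.cons e (.cons₂ d (List.Sublist.refl R.reverse)))))))))
  have h8take : ∀ i m, m + i = P.length →
      cp ((P.take m ++ [a, b], R.take m ++ [d, e]) : PrePair n) ∈ S := by
    intro i
    induction i with
    | zero =>
      intro m hm
      have hm' : m = P.length := by omega
      subst hm'
      rw [List.take_length, show R.take P.length = R from by rw [hPR]; exact List.take_length]
      exact h8
    | succ i ih =>
      intro m hm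
      have hmP : m < P.length := by omega
      have hmR : m < R.length := by omega
      have h1 := hax3 _ _ (hcirc8 (m + 1) (by omega)) (ih (m + 1) (by omega)) m
        (by simp only [List.length_append, List.length_take, List.length_cons,
          List.length_nil]; omega)
      rwa [eraseIdx_take_append P hmP [a, b], eraseIdx_take_append R hmR [d, e]] at h1
  have hE : ∀ m, m ≤ P.length → cp ((P.take m ++ [b], R.take m ++ [e]) : PrePair n) ∈ S := by
    intro m hm
    have h1 := hax3 _ _ (hcirc8 m hm) (h8take (P.length - m) m (by omega)) m
      (by simp only [List.length_append, List.length_take, List.length_cons,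
        List.length_nil]; omega)
    rwa [eraseIdx_at_take P hm a [b], eraseIdx_at_take R (by omega) d [e]] at h1
  have hBF : ∀ m, m ≤ P.length → cp ((P.take m ++ [b], R.take m ++ [f]) : PrePair n) ∈ S := by
    intro m
    induction m with
    | zero => intro _; simpa using hbf
    | succ m ih =>
      intro hm1
      have hmP : m < P.length := by omega
      have hmR : m < R.length := by omega
      have hrtake : (R.take (m + 1)).reverse = R[m] :: (R.take m).reverse := by
        rw [take_succ_eq R hmR]; simp
      have hptake : (P.take (m + 1)).reverse = P[m] :: (P.take m).reverse := by
        rw [take_succ_eq P hmP]; simp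
      have hfr : f ≠ R[m] := fun h => hfR (h ▸ (List.getElem_mem hmR : R[m] ∈ R))
      have hbp : b ≠ P[m] := fun h => hbP (h ▸ (List.getElem_mem hmP : P[m] ∈ P))
      have hcc : ClockwiseCyclic ((f :: e :: (R.take (m + 1)).reverse)
          ++ (b :: (P.take (m + 1)).reverse).reverse) := by
        refine cc_sublist ?_ hccF
        have e1 : (f :: e :: (R.take (m + 1)).reverse) ++ (b :: (P.take (m + 1)).reverse).reverse
            = f :: e :: ((R.take (m + 1)).reverse ++ (P.take (m + 1) ++ [b])) := by simp
        rw [e1]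
        exact .cons₂ f (.cons₂ e (.cons d (((List.take_sublist (m + 1) R).reverse).append
          ((List.take_sublist (m + 1) P).append (.cons a (.cons₂ b (List.nil_sublist _)))))))
      have htri : List.Sublist [f, e, R[m]] (f :: e :: (R.take (m + 1)).reverse) := by
        rw [hrtake]
        exact .cons₂ f (.cons₂ e (.cons₂ _ (List.nil_sublist _)))
      have hdm : P[m] ∈ b :: (P.take (m + 1)).reverse := by
        rw [hptake]; simp
      have key := (hax2 (f :: e :: (R.take (m + 1)).reverse) (b :: (P.take (m + 1)).reverse)
        f e (R[m]) (P[m])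
        (by simp only [List.length_cons, List.length_reverse, List.length_take]; omega)
        hcc htri hdm).2.1
      have hy1 : cp (((f :: e :: (R.take (m + 1)).reverse).erase f,
          b :: (P.take (m + 1)).reverse) : PrePair n) ∈ S := by
        have h := hE (m + 1) hm1
        rw [cp_flip_eq] at h
        rw [show (f :: e :: (R.take (m + 1)).reverse).erase f
            = (R.take (m + 1) ++ [e]).reverse from by rw [List.erase_cons_head]; simp,
          show b :: (P.take (m + 1)).reverse = (P.take (m + 1) ++ [b]).reverse from by simp]
        exact h
      have hy2 : cp ((((f :: e :: (R.take (m + 1)).reverse).erase e).erase (R[m]),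
          (b :: (P.take (m + 1)).reverse).erase (P[m])) : PrePair n) ∈ S := by
        have h := ih (by omega)
        rw [cp_flip_eq] at h
        have e1 : ((f :: e :: (R.take (m + 1)).reverse).erase e).erase (R[m])
            = (R.take m ++ [f]).reverse := by
          rw [erase_cons_ne hfe, List.erase_cons_head, hrtake, erase_cons_ne hfr,
            List.erase_cons_head]
          simp
        have e2 : (b :: (P.take (m + 1)).reverse).erase (P[m])
            = (P.take m ++ [b]).reverse := by
          rw [hptake, erase_cons_ne hbp, List.erase_cons_head]
          simp
        rw [e1, e2]
        exact h
      have hy := (key ⟨hy1, hy2⟩).1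
      rw [show (f :: e :: (R.take (m + 1)).reverse).erase e
          = (R.take (m + 1) ++ [f]).reverse from by
            rw [erase_cons_ne hfe, List.erase_cons_head]; simp,
        show b :: (P.take (m + 1)).reverse = (P.take (m + 1) ++ [b]).reverse from by simp] at hy
      rw [cp_flip_eq]
      exact hy
  have hADF : cp ((P ++ [a, b], R ++ [d, f]) : PrePair n) ∈ S := by
    have hcc : ClockwiseCyclic ((f :: e :: d :: R.reverse)
        ++ (b :: a :: P.reverse).reverse) := by
      refine cc_sublist ?_ hccF
      have e1 : (f :: e :: d :: R.reverse) ++ (b :: a :: P.reverse).reverse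
          = f :: e :: d :: (R.reverse ++ (P ++ [a, b])) := by simp
      rw [e1]
      exact .cons₂ f (.cons₂ e (.cons₂ d ((List.Sublist.refl R.reverse).append
        ((List.Sublist.refl P).append (.cons₂ a (.cons₂ b (List.nil_sublist _)))))))
    have htri : List.Sublist [f, e, d] (f :: e :: d :: R.reverse) :=
      .cons₂ f (.cons₂ e (.cons₂ d (List.nil_sublist _)))
    have hdm : a ∈ b :: a :: P.reverse := by simp
    have key := (hax2 (f :: e :: d :: R.reverse) (b :: a :: P.reverse) f e d a
      (by simp only [List.length_cons, List.length_reverse]; omega) hcc htri hdm).2.1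
    have hy1 : cp (((f :: e :: d :: R.reverse).erase f, b :: a :: P.reverse) : PrePair n) ∈ S := by
      have h := h8
      rw [cp_flip_eq] at h
      rw [show (f :: e :: d :: R.reverse).erase f = (R ++ [d, e]).reverse from by
          rw [List.erase_cons_head]; simp,
        show b :: a :: P.reverse = (P ++ [a, b]).reverse from by simp]
      exact h
    have hy2 : cp ((((f :: e :: d :: R.reverse).erase e).erase d,
        (b :: a :: P.reverse).erase a) : PrePair n) ∈ S := by
      have h := hBF P.length (le_refl _)
      rw [List.take_length,
        show R.take P.length = R from by rw [hPR]; exact List.take_length] at h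
      rw [cp_flip_eq] at h
      rw [show ((f :: e :: d :: R.reverse).erase e).erase d = (R ++ [f]).reverse from by
          rw [erase_cons_ne hfe, List.erase_cons_head, erase_cons_ne hfd,
            List.erase_cons_head]
          simp,
        show (b :: a :: P.reverse).erase a = (P ++ [b]).reverse from by
          rw [erase_cons_ne hba, List.erase_cons_head]; simp]
      exact h
    have hy := (key ⟨hy1, hy2⟩).1
    rw [show (f :: e :: d :: R.reverse).erase e = (R ++ [d, f]).reverse from by
        rw [erase_cons_ne hfe, List.erase_cons_head]; simp,
      show b :: a :: P.reverse = (P ++ [a, b]).reverse from by simp] at hy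
    rw [cp_flip_eq]
    exact hy
  have h9tk : ∀ i k, k + i = Q.length →
      cp ((P ++ [a, c] ++ Q.take k, R ++ [d, f] ++ T.take k) : PrePair n) ∈ S := by
    intro i
    induction i with
    | zero =>
      intro k hk
      have hk' : k = Q.length := by omega
      subst hk'
      rw [List.take_length, show T.take Q.length = T from by rw [hQT]; exact List.take_length]
      exact h9
    | succ i ih =>
      intro k hk
      have hkQ : k < Q.length := by omega
      have hkT : k < T.length := by omega
      have h1 := hax3 _ _ (hcirc9 (k + 1) (by omega)) (ih (k + 1) (by omega))
        (P.length + 2 + k)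
        (by simp only [List.length_append, List.length_take, List.length_cons,
          List.length_nil]; omega)
      rw [show P.length + 2 + k = (P ++ [a, c]).length + k from by simp] at h1
      rw [eraseIdx_app_take (P ++ [a, c]) Q hkQ] at h1
      rw [show (P ++ [a, c]).length + k = (R ++ [d, f]).length + k from by
        simp only [List.length_append, List.length_cons, List.length_nil]; omega] at h1
      rwa [eraseIdx_app_take (R ++ [d, f]) T hkT] at h1
  have hH9 : ∀ k, k ≤ Q.length →
      cp ((P ++ [a, c] ++ Q.take k, R ++ [d, f] ++ T.take k) : PrePair n) ∈ S :=
    fun k hk => h9tk (Q.length - k) k (by omega)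
  have hYtake : ∀ k, k ≤ Q.length →
      cp ((P ++ [a, b] ++ Q.take k, R ++ [d, f] ++ T.take k) : PrePair n) ∈ S := by
    intro k
    induction k with
    | zero => intro _; simpa using hADF
    | succ k ih =>
      intro hk1
      have hkQ : k < Q.length := by omega
      have hkT : k < T.length := by omega
      have hqQ : Q[k] ∈ Q := List.getElem_mem hkQ
      have htT : T[k] ∈ T := List.getElem_mem hkT
      have hqP : Q[k] ∉ P := fun h => hdisjP _ h _ (by simp [hqQ]) rfl
      have hqa : Q[k] ≠ a := fun h => haQ (h ▸ hqQ)
      have hqb : Q[k] ≠ b := fun h => hbQ (h ▸ hqQ)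
      have hqtk : Q[k] ∉ Q.take k := not_mem_take_self hndQ hkQ
      have htR : T[k] ∉ R := fun h => hdisjR _ h _ (by simp [htT]) rfl
      have htd : T[k] ≠ d := fun h => hdT (h ▸ htT)
      have htf : T[k] ≠ f := fun h => hfT (h ▸ htT)
      have httk : T[k] ∉ T.take k := not_mem_take_self hndT hkT
      have hcc : ClockwiseCyclic ((P ++ a :: b :: c :: Q.take (k + 1))
          ++ (R ++ d :: f :: T.take (k + 1)).reverse) := by
        refine cc_sublist ?_ hcwW
        have e1 : (P ++ a :: b :: c :: Q.take (k + 1))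
            ++ (R ++ d :: f :: T.take (k + 1)).reverse
            = P ++ (a :: b :: c :: (Q.take (k + 1) ++ ((T.take (k + 1)).reverse
              ++ (f :: d :: R.reverse)))) := by simp
        rw [e1]
        exact (List.Sublist.refl P).append (.cons₂ a (.cons₂ b (.cons₂ c
          ((List.take_sublist (k + 1) Q).append
            (((List.take_sublist (k + 1) T).reverse).append
              (.cons₂ f (.cons e (.cons₂ d (List.Sublist.refl R.reverse)))))))))
      have htri : List.Sublist [b, c, Q[k]] (P ++ a :: b :: c :: Q.take (k + 1)) := by
        refine sl_skip P (.cons a (.cons₂ b (.cons₂ c ?_)))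
        exact List.singleton_sublist.mpr (mem_take_succ Q hkQ)
      have hdm : T[k] ∈ R ++ d :: f :: T.take (k + 1) :=
        List.mem_append_right _ (List.mem_cons_of_mem _ (List.mem_cons_of_mem _
          (mem_take_succ T hkT)))
      have key := (hax2 (P ++ a :: b :: c :: Q.take (k + 1)) (R ++ d :: f :: T.take (k + 1))
        b c (Q[k]) (T[k])
        (by simp only [List.length_append, List.length_cons, List.length_take]; omega)
        hcc htri hdm).2.1
      have e_b : (P ++ a :: b :: c :: Q.take (k + 1)).erase b
          = P ++ [a, c] ++ Q.take (k + 1) := by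
        rw [show P ++ a :: b :: c :: Q.take (k + 1)
            = (P ++ [a]) ++ b :: (c :: Q.take (k + 1)) from by simp]
        rw [erase_concat _ _ (by simp [hbP, hba])]
        simp
      have e_c : (P ++ a :: b :: c :: Q.take (k + 1)).erase c
          = P ++ a :: b :: Q.take (k + 1) := by
        rw [show P ++ a :: b :: c :: Q.take (k + 1)
            = (P ++ [a, b]) ++ c :: Q.take (k + 1) from by simp]
        rw [erase_concat _ _ (by simp [hcP, hca, hcb])]
        simp
      have e_cq : ((P ++ a :: b :: c :: Q.take (k + 1)).erase c).erase (Q[k])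
          = P ++ a :: b :: Q.take k := by
        rw [e_c, take_succ_eq Q hkQ]
        rw [show P ++ a :: b :: (Q.take k ++ [Q[k]])
            = (P ++ a :: b :: Q.take k) ++ Q[k] :: [] from by simp]
        rw [erase_concat _ _ (by simp [hqP, hqa, hqb, hqtk])]
        simp
      have e_t : (R ++ d :: f :: T.take (k + 1)).erase (T[k])
          = R ++ d :: f :: T.take k := by
        rw [take_succ_eq T hkT]
        rw [show R ++ d :: f :: (T.take k ++ [T[k]])
            = (R ++ d :: f :: T.take k) ++ T[k] :: [] from by simp]
        rw [erase_concat _ _ (by simp [htR, htd, htf, httk])]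
        simp
      have hy1 : cp (((P ++ a :: b :: c :: Q.take (k + 1)).erase b,
          R ++ d :: f :: T.take (k + 1)) : PrePair n) ∈ S := by
        rw [e_b, show R ++ d :: f :: T.take (k + 1)
          = R ++ [d, f] ++ T.take (k + 1) from by simp]
        exact hH9 (k + 1) hk1
      have hy2 : cp ((((P ++ a :: b :: c :: Q.take (k + 1)).erase c).erase (Q[k]),
          (R ++ d :: f :: T.take (k + 1)).erase (T[k])) : PrePair n) ∈ S := by
        rw [e_cq, e_t]
        have h := ih (by omega)
        rw [show P ++ [a, b] ++ Q.take k = P ++ a :: b :: Q.take k from by simp,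
          show R ++ [d, f] ++ T.take k = R ++ d :: f :: T.take k from by simp] at h
        exact h
      have hy := (key ⟨hy1, hy2⟩).1
      rw [e_c] at hy
      rw [show P ++ [a, b] ++ Q.take (k + 1) = P ++ a :: b :: Q.take (k + 1) from by simp,
        show R ++ [d, f] ++ T.take (k + 1) = R ++ d :: f :: T.take (k + 1) from by simp]
      exact hy
  have hG : ∀ k, k ≤ Q.length →
      cp ((P ++ [a, b] ++ Q.take k, R ++ [d, e] ++ T.take k) : PrePair n) ∈ S := by
    intro k
    induction k with
    | zero => intro _; simpa using h8
    | succ k ih =>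
      intro hk1
      have hkQ : k < Q.length := by omega
      have hkT : k < T.length := by omega
      have hTtake : (T.take (k + 1)).reverse = T[k] :: (T.take k).reverse := by
        rw [take_succ_eq T hkT]; simp
      have hQtake : (Q.take (k + 1)).reverse = Q[k] :: (Q.take k).reverse := by
        rw [take_succ_eq Q hkQ]; simp
      have heTt : e ∉ (T.take (k + 1)).reverse ++ [f] := by
        intro h
        rcases List.mem_append.mp h with h | h
        · exact heT ((List.take_sublist _ _).subset (List.mem_reverse.mp h))
        · exact hfe.symm (by simpa using h)
      have hfTt : f ∉ (T.take k).reverse := fun h =>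
        hfT ((List.take_sublist _ _).subset (List.mem_reverse.mp h))
      have hfTt1 : f ∉ (T.take (k + 1)).reverse := fun h =>
        hfT ((List.take_sublist _ _).subset (List.mem_reverse.mp h))
      have hcc : ClockwiseCyclic (((T.take (k + 1)).reverse ++ f :: e :: d :: R.reverse)
          ++ ((Q.take (k + 1)).reverse ++ b :: a :: P.reverse).reverse) := by
        refine cc_sublist ?_ hccT
        have e1 : ((T.take (k + 1)).reverse ++ f :: e :: d :: R.reverse)
            ++ ((Q.take (k + 1)).reverse ++ b :: a :: P.reverse).reverse
            = (T.take (k + 1)).reverse ++ (f :: e :: d :: (R.reverse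
              ++ (P ++ (a :: b :: Q.take (k + 1))))) := by simp
        rw [e1]
        exact ((List.take_sublist (k + 1) T).reverse).append (.cons₂ f (.cons₂ e (.cons₂ d
          ((List.Sublist.refl R.reverse).append ((List.Sublist.refl P).append
            (.cons₂ a (.cons₂ b (.cons c (List.take_sublist (k + 1) Q)))))))))
      have htri : List.Sublist [T[k], f, e]
          ((T.take (k + 1)).reverse ++ f :: e :: d :: R.reverse) := by
        rw [hTtake]
        exact .cons₂ _ (sl_skip ((T.take k).reverse)
          (.cons₂ f (.cons₂ e (List.nil_sublist _))))
      have hdm : Q[k] ∈ (Q.take (k + 1)).reverse ++ b :: a :: P.reverse := by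
        rw [hQtake]; simp
      have key := (hax2 ((T.take (k + 1)).reverse ++ f :: e :: d :: R.reverse)
        ((Q.take (k + 1)).reverse ++ b :: a :: P.reverse)
        (T[k]) f e (Q[k])
        (by simp only [List.length_append, List.length_cons, List.length_reverse,
          List.length_take]; omega)
        hcc htri hdm).2.2
      have e_e : ((T.take (k + 1)).reverse ++ f :: e :: d :: R.reverse).erase e
          = (T.take (k + 1)).reverse ++ f :: d :: R.reverse := by
        rw [show (T.take (k + 1)).reverse ++ f :: e :: d :: R.reverse
            = ((T.take (k + 1)).reverse ++ [f]) ++ e :: (d :: R.reverse) from by simp]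
        rw [erase_concat _ _ heTt]
        simp
      have e_f1 : ((T.take (k + 1)).reverse ++ f :: e :: d :: R.reverse).erase f
          = (T.take (k + 1)).reverse ++ e :: d :: R.reverse := by
        rw [show (T.take (k + 1)).reverse ++ f :: e :: d :: R.reverse
            = (T.take (k + 1)).reverse ++ f :: (e :: d :: R.reverse) from rfl]
        rw [erase_concat _ _ hfTt1]
      have e_tf : (((T.take (k + 1)).reverse ++ f :: e :: d :: R.reverse).erase
            (T[k])).erase f
          = (T.take k).reverse ++ e :: d :: R.reverse := by
        rw [hTtake]
        rw [show (T[k] :: (T.take k).reverse) ++ f :: e :: d :: R.reverse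
            = T[k] :: ((T.take k).reverse ++ f :: e :: d :: R.reverse) from by simp]
        rw [List.erase_cons_head]
        rw [show (T.take k).reverse ++ f :: e :: d :: R.reverse
            = (T.take k).reverse ++ f :: (e :: d :: R.reverse) from rfl]
        rw [erase_concat _ _ hfTt]
      have e_q : ((Q.take (k + 1)).reverse ++ b :: a :: P.reverse).erase (Q[k])
          = (Q.take k).reverse ++ b :: a :: P.reverse := by
        rw [hQtake]
        rw [show (Q[k] :: (Q.take k).reverse) ++ b :: a :: P.reverse
            = Q[k] :: ((Q.take k).reverse ++ b :: a :: P.reverse) from by simp]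
        rw [List.erase_cons_head]
      have hy1 : cp ((((T.take (k + 1)).reverse ++ f :: e :: d :: R.reverse).erase e,
          (Q.take (k + 1)).reverse ++ b :: a :: P.reverse) : PrePair n) ∈ S := by
        have h := hYtake (k + 1) hk1
        rw [cp_flip_eq] at h
        rw [e_e, show (T.take (k + 1)).reverse ++ f :: d :: R.reverse
            = (R ++ [d, f] ++ T.take (k + 1)).reverse from by simp,
          show (Q.take (k + 1)).reverse ++ b :: a :: P.reverse
            = (P ++ [a, b] ++ Q.take (k + 1)).reverse from by simp]
        exact h
      have hy2 : cp (((((T.take (k + 1)).reverse ++ f :: e :: d :: R.reverse).erase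
            (T[k])).erase f,
          ((Q.take (k + 1)).reverse ++ b :: a :: P.reverse).erase (Q[k]))
            : PrePair n) ∈ S := by
        have h := ih (by omega)
        rw [cp_flip_eq] at h
        rw [e_tf, e_q,
          show (T.take k).reverse ++ e :: d :: R.reverse
            = (R ++ [d, e] ++ T.take k).reverse from by simp,
          show (Q.take k).reverse ++ b :: a :: P.reverse
            = (P ++ [a, b] ++ Q.take k).reverse from by simp]
        exact h
      have hy := (key ⟨hy1, hy2⟩).1
      rw [e_f1] at hy
      rw [cp_flip_eq]
      rw [show (R ++ [d, e] ++ T.take (k + 1)).reverse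
          = (T.take (k + 1)).reverse ++ e :: d :: R.reverse from by simp,
        show (P ++ [a, b] ++ Q.take (k + 1)).reverse
          = (Q.take (k + 1)).reverse ++ b :: a :: P.reverse from by simp]
      exact hy
  have hfin := hG Q.length (le_refl _)
  rw [List.take_length,
    show T.take Q.length = T from by rw [hQT]; exact List.take_length] at hfin
  exact hfin

end CircularPlanar
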